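/- Ins shifts the target but not the source of a straddling Move: for j < i ≤ k (so j ≠ k), applying Move[j, k] then Ins[i, t] equals applying Ins[i, t] then Move[j, k+1]; and for k < i ≤ j, applying Move[j, k] then Ins[i, t] equals applying Ins[i, t] then Move[j+1, k]. -/

import Mathlib

/-!
With 0-based indices, `Ins[i, t]` inserts at position `m = i - 1` and moves every position `≥ m`
one step to the right, while a Move is two `List.set`s plus a read. Insertion commutes with a
`set` at `n` once `n` is shifted (`n` if `n < m`, `n + 1` otherwise), and reading the shifted
position of the extended list gives the old entry. In a straddling Move exactly one of source and
target lies at or beyond `m`, so only that index is shifted.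
-/

/-- Atomic types of document components. -/
inductive Ty where
  | num | str | bool | del
deriving DecidableEq, Repr

/-- A document is a tuple (list) of atomic types. -/
abbrev Doc := List Ty

/-- Edit operations (1-based indices). `ins i t p` inserts type `t` at index `i`
    (with unique identifier `p`), shifting indices ≥ i right; `conv i t` sets the
    type at index `i` to `t`; `move i j` sets index `i` to the type at index `j`
    and sets index `j` to the tombstone `del`. -/
inductive Edit where
  | id
  | ins (i : ℕ) (t : Ty) (p : ℕ)
  | conv (i : ℕ) (t : Ty)
  | move (i j : ℕ)
deriving DecidableEq, Repr

/-- Partial action of an edit on a document (1-based indices). -/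
def Edit.apply : Edit → Doc → Option Doc
  | .id, d => some d
  | .ins i t _, d =>
      if 1 ≤ i ∧ i ≤ d.length + 1 then
        some (d.take (i-1) ++ t :: d.drop (i-1))
      else none
  | .conv i t, d =>
      if 1 ≤ i ∧ i ≤ d.length then some (d.set (i-1) t) else none
  | .move i j, d =>
      if 1 ≤ i ∧ i ≤ d.length ∧ 1 ≤ j ∧ j ≤ d.length ∧ i ≠ j then
        some ((d.set (i-1) (d.getD (j-1) .del)).set (j-1) .del)
      else none

namespace List

variable {α : Type*}

theorem take_append_cons_drop_eq_insertIdx (l : List α) (a : α) {n : ℕ} (hn : n ≤ l.length) :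
    l.take n ++ a :: l.drop n = l.insertIdx n a := by
  induction l generalizing n with
  | nil => simp_all
  | cons x l ih =>
    cases n with
    | zero => simp
    | succ n => simp [ih (Nat.le_of_succ_le_succ hn), insertIdx_succ_cons]

theorem insertIdx_set_of_lt (l : List α) (a b : α) {m n : ℕ} (h : n < m) :
    (l.set n a).insertIdx m b = (l.insertIdx m b).set n a := by
  apply ext_getElem?
  intro i
  simp only [getElem?_insertIdx, getElem?_set, length_set, length_insertIdx]
  split_ifs <;> first | rfl | omega

theorem insertIdx_set_of_le (l : List α) (a b : α) {m n : ℕ} (h : m ≤ n) :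
    (l.set n a).insertIdx m b = (l.insertIdx m b).set (n + 1) a := by
  apply ext_getElem?
  intro i
  simp only [getElem?_insertIdx, getElem?_set, length_set, length_insertIdx]
  split_ifs <;> first | rfl | omega

def moveIdx (l : List α) (a b : ℕ) (x : α) : List α :=
  (l.set a (l.getD b x)).set b x

theorem insertIdx_moveIdx_of_lt_of_le (l : List α) (x y : α) {a b m : ℕ} (ha : a < m)
    (hb : m ≤ b) : (l.moveIdx a b x).insertIdx m y = (l.insertIdx m y).moveIdx a (b + 1) x := by
  have hget : (l.insertIdx m y).getD (b + 1) x = l.getD b x := by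
    simp only [getD_eq_getElem?_getD, getElem?_insertIdx_of_gt (Nat.lt_succ_of_le hb),
      Nat.add_one_sub_one]
  rw [moveIdx, moveIdx, hget, insertIdx_set_of_le _ _ _ hb, insertIdx_set_of_lt _ _ _ ha]

theorem insertIdx_moveIdx_of_le_of_lt (l : List α) (x y : α) {a b m : ℕ} (ha : m ≤ a)
    (hb : b < m) : (l.moveIdx a b x).insertIdx m y = (l.insertIdx m y).moveIdx (a + 1) b x := by
  have hget : (l.insertIdx m y).getD b x = l.getD b x := by
    simp only [getD_eq_getElem?_getD, getElem?_insertIdx_of_lt hb]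
  rw [moveIdx, moveIdx, hget, insertIdx_set_of_lt _ _ _ hb, insertIdx_set_of_le _ _ _ ha]

end List

namespace Edit

theorem apply_ins_eq_some {i : ℕ} {t : Ty} {p : ℕ} {d r : Doc} :
    (ins i t p).apply d = some r ↔ (1 ≤ i ∧ i ≤ d.length + 1) ∧ d.insertIdx (i - 1) t = r := by
  rw [apply, Option.ite_none_right_eq_some, Option.some_inj]
  constructor
  · rintro ⟨hi, rfl⟩
    exact ⟨hi, (d.take_append_cons_drop_eq_insertIdx t (by omega)).symm⟩
  · rintro ⟨hi, rfl⟩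
    exact ⟨hi, d.take_append_cons_drop_eq_insertIdx t (by omega)⟩

theorem apply_move_eq_some {j k : ℕ} {d r : Doc} :
    (move j k).apply d = some r ↔ (1 ≤ j ∧ j ≤ d.length ∧ 1 ≤ k ∧ k ≤ d.length ∧ j ≠ k) ∧
      d.moveIdx (j - 1) (k - 1) .del = r := by
  rw [apply, Option.ite_none_right_eq_some, Option.some_inj]; rfl

theorem eq_of_move_bind_ins {i j k : ℕ} {t : Ty} {p : ℕ} {d r : Doc}
    (h : ((move j k).apply d >>= (ins i t p).apply) = some r) :
    1 ≤ j ∧ 1 ≤ k ∧ r = (d.moveIdx (j - 1) (k - 1) .del).insertIdx (i - 1) t := by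
  obtain ⟨_, hmove, hins⟩ := Option.bind_eq_some_iff.mp h
  obtain ⟨⟨hj, -, hk, -⟩, rfl⟩ := apply_move_eq_some.mp hmove
  exact ⟨hj, hk, (apply_ins_eq_some.mp hins).2.symm⟩

theorem eq_of_ins_bind_move {i j k : ℕ} {t : Ty} {p : ℕ} {d r : Doc}
    (h : ((ins i t p).apply d >>= (move j k).apply) = some r) :
    r = (d.insertIdx (i - 1) t).moveIdx (j - 1) (k - 1) .del := by
  obtain ⟨_, hins, hmove⟩ := Option.bind_eq_some_iff.mp h
  obtain ⟨-, rfl⟩ := apply_ins_eq_some.mp hins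
  exact (apply_move_eq_some.mp hmove).2.symm

end Edit

/-- Ins shifts the target but not the source of a straddling Move:
for `j < i ≤ k`, `Move[j,k]` then `Ins[i,t]` equals `Ins[i,t]` then `Move[j,k+1]`;
and for `k < i ≤ j`, `Move[j,k]` then `Ins[i,t]` equals `Ins[i,t]` then `Move[j+1,k]`. -/
theorem ins_straddles_move (i j k : ℕ) (t : Ty) (p : ℕ) :
    (∀ d r₁ r₂ : Doc, j < i → i ≤ k →
      ((Edit.move j k).apply d >>= (Edit.ins i t p).apply) = some r₁ →
      ((Edit.ins i t p).apply d >>= (Edit.move j (k+1)).apply) = some r₂ →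
      r₁ = r₂) ∧
    (∀ d r₁ r₂ : Doc, k < i → i ≤ j →
      ((Edit.move j k).apply d >>= (Edit.ins i t p).apply) = some r₁ →
      ((Edit.ins i t p).apply d >>= (Edit.move (j+1) k).apply) = some r₂ →
      r₁ = r₂) := by
  constructor
  · intro d r₁ r₂ hji hik h₁ h₂
    obtain ⟨hj, hk, rfl⟩ := Edit.eq_of_move_bind_ins h₁
    rw [Edit.eq_of_ins_bind_move h₂, List.insertIdx_moveIdx_of_lt_of_le _ _ _
      (show j - 1 < i - 1 by omega) (show i - 1 ≤ k - 1 by omega),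
      Nat.sub_add_cancel hk, Nat.add_sub_cancel]
  · intro d r₁ r₂ hki hij h₁ h₂
    obtain ⟨hj, hk, rfl⟩ := Edit.eq_of_move_bind_ins h₁
    rw [Edit.eq_of_ins_bind_move h₂, List.insertIdx_moveIdx_of_le_of_lt _ _ _
      (show i - 1 ≤ j - 1 by omega) (show k - 1 < i - 1 by omega),
      Nat.sub_add_cancel hj, Nat.add_sub_cancel]
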